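/- Let γ̂, λ > 0, T > 0, and let B̃ : [0, T] → ℝ be a continuous bounded function with sup norm ‖B̃‖_∞. Then the Riccati ODE F(t) = −∫ₜᵀ ( (γ̂/λ) B̃(s)² − F(s)² ) ds has a unique continuous solution F on [0, T], and it satisfies −sqrt(γ̂/λ) ‖B̃‖_∞ tanh( sqrt(γ̂/λ) ‖B̃‖_∞ (T − t) ) ≤ F(t) ≤ 0 for all t ∈ [0, T]; in particular −sqrt(γ̂/λ) ‖B̃‖_∞ ≤ F(t) ≤ 0. -/

import Mathlib

/-!
Write `q = (γ̂/λ) B̃²` and `M = √(γ̂/λ) ‖B̃‖_∞`, so that `0 ≤ q ≤ M²` and the equation is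
`F' = q - F²`, `F T = 0`. Clamping `x` to `[-M, 0]` inside `x²` makes the field globally
Lipschitz, so Picard–Lindelöf gives a solution of the clamped equation on all of `[0, T]`.
Comparing it, backwards from `T`, with the barriers `0` and `-M tanh (M (T - t))` (the solutions
for `q ≡ 0` and `q ≡ M²`, pushed apart by `δ (1 + (T - t))` to make the comparison strict) traps
it in `[-M, 0]`, where the clamp is inactive. Uniqueness is the Lipschitz uniqueness theorem for
solutions bounded on the compact interval, and the integral form is the fundamental theorem of
calculus.
-/

open Set

/-- The supremum norm of `f` on the interval `[0, T]`. -/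
noncomputable def supNorm (T : ℝ) (f : ℝ → ℝ) : ℝ :=
  sSup ((fun t => |f t|) '' Icc 0 T)

open Filter Topology Metric Real
open scoped NNReal

theorem Real.hasDerivAt_tanh (x : ℝ) : HasDerivAt tanh (1 - tanh x ^ 2) x := by
  have h := (hasDerivAt_sinh x).div (hasDerivAt_cosh x) (cosh_pos x).ne'
  rw [show tanh = sinh / cosh from funext tanh_eq_sinh_div_cosh]
  refine h.congr_deriv ?_
  rw [Pi.div_apply]
  field_simp

theorem Real.tanh_nonneg {x : ℝ} (hx : 0 ≤ x) : 0 ≤ tanh x := by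
  rw [tanh_eq_sinh_div_cosh]
  exact div_nonneg (sinh_nonneg_iff.2 hx) (cosh_pos x).le

theorem neg_le_neg_mul_tanh {M : ℝ} (hM : 0 ≤ M) (x : ℝ) : -M ≤ -M * tanh x := by
  nlinarith [tanh_lt_one x]

theorem hasDerivAt_neg_mul_tanh_mul_sub (M b t : ℝ) :
    HasDerivAt (fun s ↦ -M * tanh (M * (b - s))) (M ^ 2 - (-M * tanh (M * (b - t))) ^ 2) t := by
  have h := (hasDerivAt_tanh _).comp t (((hasDerivAt_id' t).const_sub b).const_mul M)
  refine (h.const_mul (-M)).congr_deriv ?_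
  ring

theorem le_of_forall_pos_le_add_mul {x y c : ℝ} (h : ∀ δ > 0, x ≤ y + δ * c) : x ≤ y := by
  have hlim : Tendsto (fun δ ↦ y + δ * c) (𝓝[>] 0) (𝓝 y) := by
    have : Continuous (fun δ : ℝ ↦ y + δ * c) := by fun_prop
    simpa using (this.tendsto 0).mono_left nhdsWithin_le_nhds
  exact ge_of_tendsto hlim (eventually_nhdsWithin_of_forall h)

theorem lipschitzOnWith_const_sub_sq (c : ℝ) (R : ℝ≥0) :
    LipschitzOnWith (2 * R) (fun x : ℝ ↦ c - x ^ 2) (closedBall 0 R) := by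
  refine LipschitzOnWith.of_dist_le_mul fun x hx y hy ↦ ?_
  rw [mem_closedBall_zero_iff, Real.norm_eq_abs] at hx hy
  rw [Real.dist_eq, Real.dist_eq, sub_sub_sub_cancel_left, sq_sub_sq, abs_mul, abs_sub_comm y]
  push_cast
  gcongr
  linarith [abs_add_le y x]

theorem image_le_of_deriv_left_gt_deriv_boundary {f f' B B' : ℝ → ℝ} {a b : ℝ}
    (hf : ContinuousOn f (Icc a b)) (hf' : ∀ x ∈ Ioc a b, HasDerivWithinAt f (f' x) (Iic x) x)
    (hb : f b ≤ B b) (hB : ContinuousOn B (Icc a b))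
    (hB' : ∀ x ∈ Ioc a b, HasDerivWithinAt B (B' x) (Iic x) x)
    (bound : ∀ x ∈ Ioc a b, f x = B x → B' x < f' x) : ∀ ⦃x⦄, x ∈ Icc a b → f x ≤ B x := by
  have hmaps : MapsTo Neg.neg (Icc (-b) (-a)) (Icc a b) :=
    fun _ hy ↦ ⟨le_neg.mp hy.2, neg_le.mp hy.1⟩
  have hmaps' : MapsTo Neg.neg (Ico (-b) (-a)) (Ioc a b) :=
    fun _ hy ↦ ⟨lt_neg.mp hy.2, neg_le.mp hy.1⟩
  have hreflect {g g' : ℝ → ℝ} (hg : ∀ x ∈ Ioc a b, HasDerivWithinAt g (g' x) (Iic x) x)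
      (y : ℝ) (hy : y ∈ Ico (-b) (-a)) :
      HasDerivWithinAt (fun y ↦ g (-y)) (-g' (-y)) (Ici y) y := by
    have hmapsIci : MapsTo Neg.neg (Ici y) (Iic (-y)) := fun _ hz ↦ neg_le_neg (mem_Ici.mp hz)
    have h := (hg _ (hmaps' hy)).comp y (hasDerivAt_neg y).hasDerivWithinAt hmapsIci
    rw [mul_neg_one] at h
    exact h
  intro x hx
  have := image_le_of_deriv_right_lt_deriv_boundary' (hf.comp continuousOn_neg hmaps)
    (hreflect hf') (by simpa using hb) (hB.comp continuousOn_neg hmaps) (hreflect hB')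
    (fun y hy hyB ↦ neg_lt_neg (bound _ (hmaps' hy) hyB))
    (show -x ∈ Icc (-b) (-a) from ⟨neg_le_neg hx.2, neg_le_neg hx.1⟩)
  simpa using this

def clampNonpos (M x : ℝ) : ℝ := max (-M) (min x 0)

section clampNonpos

variable {M x : ℝ}

theorem lipschitzWith_clampNonpos : LipschitzWith 1 (clampNonpos M) :=
  (LipschitzWith.id.min_const 0).const_max (-M)

theorem abs_clampNonpos_le (hM : 0 ≤ M) : |clampNonpos M x| ≤ M :=
  abs_le.2 ⟨le_max_left _ _, max_le (by linarith) ((min_le_right _ _).trans hM)⟩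

theorem clampNonpos_of_mem (hx : x ∈ Icc (-M) 0) : clampNonpos M x = x := by
  rw [clampNonpos, min_eq_left hx.2, max_eq_right hx.1]

theorem clampNonpos_of_nonneg (hM : 0 ≤ M) (hx : 0 ≤ x) : clampNonpos M x = 0 := by
  rw [clampNonpos, min_eq_right hx, max_eq_right (neg_nonpos.2 hM)]

theorem sq_le_sq_clampNonpos_sub (hx : x ∈ Icc (-M) 0) {ε : ℝ} (hε : 0 ≤ ε) :
    x ^ 2 ≤ clampNonpos M (x - ε) ^ 2 := by
  have hle : clampNonpos M (x - ε) ≤ x := max_le hx.1 (min_le_of_left_le (by linarith))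
  nlinarith [hx.2]

end clampNonpos

section Riccati

variable {q : ℝ → ℝ} {a b M : ℝ}

theorem exists_hasDerivWithinAt_clampNonpos_riccati (hab : a ≤ b) (hM : 0 ≤ M)
    (hq : ContinuousOn q (Icc a b)) :
    ∃ f : ℝ → ℝ, f b = 0 ∧
      ∀ t ∈ Icc a b, HasDerivWithinAt f (q t - clampNonpos M (f t) ^ 2) (Icc a b) t := by
  obtain ⟨C, hC⟩ := isCompact_Icc.exists_bound_of_continuousOn hq
  let L : ℝ≥0 := ⟨max C 0 + M ^ 2, by positivity⟩
  have hlip (t : ℝ) :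
      LipschitzOnWith (2 * ⟨M, hM⟩ * 1) (fun x ↦ q t - clampNonpos M x ^ 2) univ :=
    (lipschitzOnWith_const_sub_sq (q t) ⟨M, hM⟩).comp
      lipschitzWith_clampNonpos.lipschitzOnWith fun x _ ↦ by
        rw [mem_closedBall_zero_iff, Real.norm_eq_abs]
        exact abs_clampNonpos_le hM
  have hPL : IsPicardLindelof (fun t x ↦ q t - clampNonpos M x ^ 2) (tmin := a) (tmax := b)
      ⟨b, hab, le_rfl⟩ 0 (L * (b - a).toNNReal) 0 L (2 * ⟨M, hM⟩ * 1) :=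
    { lipschitzOnWith := fun t _ ↦ (hlip t).mono (subset_univ _)
      continuousOn := fun _ _ ↦ hq.sub continuousOn_const
      norm_le := fun t ht x _ ↦ by
        obtain ⟨hlow, hup⟩ := abs_le.1 (abs_clampNonpos_le (x := x) hM)
        calc ‖q t - clampNonpos M x ^ 2‖ ≤ ‖q t‖ + ‖clampNonpos M x ^ 2‖ := norm_sub_le _ _
          _ ≤ max C 0 + M ^ 2 := by
            rw [Real.norm_of_nonneg (sq_nonneg _)]
            exact add_le_add ((hC t ht).trans (le_max_left _ _)) (sq_le_sq' hlow hup)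
      mul_max_le := by
        simp [sub_nonneg.2 hab, Real.coe_toNNReal _ (sub_nonneg.2 hab)] }
  exact hPL.exists_eq_forall_mem_Icc_hasDerivWithinAt₀

theorem hasDerivWithinAt_Iic_of_Icc {f f' : ℝ → ℝ}
    (hf : ∀ t ∈ Icc a b, HasDerivWithinAt f (f' t) (Icc a b) t) :
    ∀ t ∈ Ioc a b, HasDerivWithinAt f (f' t) (Iic t) t := fun t ht ↦
  (hf t (Ioc_subset_Icc_self ht)).mono_of_mem_nhdsWithin (Icc_mem_nhdsLE_of_mem ht)

theorem hasDerivAt_mul_one_add_sub (δ b t : ℝ) :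
    HasDerivAt (fun s ↦ δ * (1 + (b - s))) (-δ) t := by
  simpa using (((hasDerivAt_id' t).const_sub b).const_add 1).const_mul δ

theorem nonpos_of_clampNonpos_riccati {f : ℝ → ℝ}
    (hf : ∀ t ∈ Icc a b, HasDerivWithinAt f (q t - clampNonpos M (f t) ^ 2) (Icc a b) t)
    (hM : 0 ≤ M) (hq : ∀ t ∈ Icc a b, 0 ≤ q t) (hfb : f b = 0) :
    ∀ t ∈ Icc a b, f t ≤ 0 := by
  have hfc : ContinuousOn f (Icc a b) := fun t ht ↦ (hf t ht).continuousWithinAt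
  have hbarrier : ∀ δ > 0, ∀ t ∈ Icc a b, f t ≤ δ * (1 + (b - t)) := fun δ hδ ↦
    image_le_of_deriv_left_gt_deriv_boundary hfc (hasDerivWithinAt_Iic_of_Icc hf)
      (by rw [hfb, sub_self, add_zero, mul_one]; exact hδ.le) (by fun_prop)
      (fun t _ ↦ (hasDerivAt_mul_one_add_sub δ b t).hasDerivWithinAt) fun t ht hft ↦ by
        have hpos : 0 ≤ f t := by rw [hft]; nlinarith [ht.2]
        rw [clampNonpos_of_nonneg hM hpos]
        linarith [hq t (Ioc_subset_Icc_self ht)]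
  intro t ht
  exact le_of_forall_pos_le_add_mul fun δ hδ ↦ by simpa using hbarrier δ hδ t ht

theorem neg_mul_tanh_le_of_clampNonpos_riccati {f : ℝ → ℝ}
    (hf : ∀ t ∈ Icc a b, HasDerivWithinAt f (q t - clampNonpos M (f t) ^ 2) (Icc a b) t)
    (hM : 0 ≤ M) (hq : ∀ t ∈ Icc a b, q t ≤ M ^ 2) (hfb : f b = 0) :
    ∀ t ∈ Icc a b, -M * tanh (M * (b - t)) ≤ f t := by
  have hfc : ContinuousOn f (Icc a b) := fun t ht ↦ (hf t ht).continuousWithinAt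
  have hderiv (δ t : ℝ) := (hasDerivAt_neg_mul_tanh_mul_sub M b t).sub
    (hasDerivAt_mul_one_add_sub δ b t)
  have hbarrier : ∀ δ > 0, ∀ t ∈ Icc a b,
      -M * tanh (M * (b - t)) - δ * (1 + (b - t)) ≤ f t := fun δ hδ ↦
    image_le_of_deriv_left_gt_deriv_boundary
      (f' := fun t ↦ M ^ 2 - (-M * tanh (M * (b - t))) ^ 2 - -δ)
      (fun t _ ↦ (hderiv δ t).continuousAt.continuousWithinAt)
      (fun t _ ↦ (hderiv δ t).hasDerivWithinAt)
      (by simp [hfb, hδ.le]) hfc (hasDerivWithinAt_Iic_of_Icc hf) fun t ht hft ↦ by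
        have hmem : -M * tanh (M * (b - t)) ∈ Icc (-M) 0 :=
          ⟨neg_le_neg_mul_tanh hM _, mul_nonpos_of_nonpos_of_nonneg (neg_nonpos.2 hM)
            (tanh_nonneg (mul_nonneg hM (sub_nonneg.2 ht.2)))⟩
        have hsq := sq_le_sq_clampNonpos_sub hmem (ε := δ * (1 + (b - t)))
          (mul_nonneg hδ.le (by linarith [ht.2]))
        rw [← hft]
        linarith [hq t (Ioc_subset_Icc_self ht)]
  intro t ht
  exact le_of_forall_pos_le_add_mul (c := 1 + (b - t)) fun δ hδ ↦ by
    linarith [hbarrier δ hδ t ht]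

theorem eq_neg_integral_of_hasDerivWithinAt {f g : ℝ → ℝ} (hfb : f b = 0)
    (hf : ∀ t ∈ Icc a b, HasDerivWithinAt f (g t) (Icc a b) t) (hg : ContinuousOn g (Icc a b)) :
    ∀ t ∈ Icc a b, f t = -∫ s in t..b, g s := by
  intro t ht
  have hsub : Icc t b ⊆ Icc a b := Icc_subset_Icc_left ht.1
  rw [intervalIntegral.integral_eq_sub_of_hasDerivAt_of_le ht.2
    (fun s hs ↦ (hf s (hsub hs)).continuousWithinAt.mono hsub)
    (fun s hs ↦ (hf s (hsub (Ioo_subset_Icc_self hs))).hasDerivAt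
      (Icc_mem_nhds (ht.1.trans_lt hs.1) hs.2))
    ((hg.mono hsub).intervalIntegrable_of_Icc ht.2), hfb]
  ring

theorem hasDerivWithinAt_of_eq_neg_integral {f g : ℝ → ℝ} (hg : ContinuousOn g (Icc a b))
    (hf : ∀ t ∈ Icc a b, f t = -∫ s in t..b, g s) :
    ∀ t ∈ Icc a b, HasDerivWithinAt f (g t) (Icc a b) t := by
  intro t ht
  have : Fact (t ∈ Icc a b) := ⟨ht⟩
  have hderiv := (intervalIntegral.integral_hasDerivWithinAt_left (s := Icc a b)
    ((hg.mono (Icc_subset_Icc_left ht.1)).intervalIntegrable_of_Icc ht.2)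
    (hg.stronglyMeasurableAtFilter_nhdsWithin measurableSet_Icc t) (hg t ht)).neg
  rw [neg_neg] at hderiv
  exact hderiv.congr hf (hf t ht)

theorem exists_riccati_solution (hab : a ≤ b) (hM : 0 ≤ M) (hq : ContinuousOn q (Icc a b))
    (hq0 : ∀ t ∈ Icc a b, 0 ≤ q t) (hqM : ∀ t ∈ Icc a b, q t ≤ M ^ 2) :
    ∃ f : ℝ → ℝ, f b = 0 ∧ (∀ t ∈ Icc a b, HasDerivWithinAt f (q t - f t ^ 2) (Icc a b) t) ∧
      ∀ t ∈ Icc a b, -M * tanh (M * (b - t)) ≤ f t ∧ f t ≤ 0 := by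
  obtain ⟨f, hfb, hf⟩ := exists_hasDerivWithinAt_clampNonpos_riccati hab hM hq
  have hbounds (t : ℝ) (ht : t ∈ Icc a b) : -M * tanh (M * (b - t)) ≤ f t ∧ f t ≤ 0 :=
    ⟨neg_mul_tanh_le_of_clampNonpos_riccati hf hM hqM hfb t ht,
      nonpos_of_clampNonpos_riccati hf hM hq0 hfb t ht⟩
  refine ⟨f, hfb, fun t ht ↦ ?_, hbounds⟩
  have hmem : f t ∈ Icc (-M) 0 :=
    ⟨(neg_le_neg_mul_tanh hM _).trans (hbounds t ht).1, (hbounds t ht).2⟩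
  simpa only [clampNonpos_of_mem hmem] using hf t ht

theorem eqOn_of_hasDerivWithinAt_riccati {f g : ℝ → ℝ}
    (hf : ∀ t ∈ Icc a b, HasDerivWithinAt f (q t - f t ^ 2) (Icc a b) t)
    (hg : ∀ t ∈ Icc a b, HasDerivWithinAt g (q t - g t ^ 2) (Icc a b) t) (hb : f b = g b) :
    EqOn f g (Icc a b) := by
  have hfc : ContinuousOn f (Icc a b) := fun t ht ↦ (hf t ht).continuousWithinAt
  have hgc : ContinuousOn g (Icc a b) := fun t ht ↦ (hg t ht).continuousWithinAt
  obtain ⟨R, hR, hball⟩ := ((isCompact_Icc.image_of_continuousOn hfc).union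
    (isCompact_Icc.image_of_continuousOn hgc)).isBounded.subset_closedBall_lt 0 0
  exact ODE_solution_unique_of_mem_Icc_left (v := fun t x ↦ q t - x ^ 2)
    (s := fun _ ↦ closedBall 0 R) (fun t _ ↦ lipschitzOnWith_const_sub_sq (q t) ⟨R, hR.le⟩)
    hfc (hasDerivWithinAt_Iic_of_Icc hf)
    (fun t ht ↦ hball (Or.inl ⟨t, Ioc_subset_Icc_self ht, rfl⟩))
    hgc (hasDerivWithinAt_Iic_of_Icc hg)
    (fun t ht ↦ hball (Or.inr ⟨t, Ioc_subset_Icc_self ht, rfl⟩)) hb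

end Riccati

theorem abs_le_supNorm {T : ℝ} {f : ℝ → ℝ} (hf : ContinuousOn f (Icc 0 T)) {t : ℝ}
    (ht : t ∈ Icc 0 T) : |f t| ≤ supNorm T f :=
  le_csSup (isCompact_Icc.image_of_continuousOn hf.abs).bddAbove ⟨t, ht, rfl⟩

theorem supNorm_nonneg (T : ℝ) (f : ℝ → ℝ) : 0 ≤ supNorm T f :=
  Real.sSup_nonneg fun _ ⟨_, _, hx⟩ ↦ hx ▸ abs_nonneg _

/-- The Riccati integral equation `F(t) = −∫ₜᵀ ((γ̂/λ) B̃(s)² − F(s)²) ds` has a unique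
continuous solution on `[0, T]`, which satisfies
`−√(γ̂/λ)‖B̃‖_∞ tanh(√(γ̂/λ)‖B̃‖_∞ (T − t)) ≤ F(t) ≤ 0`, and in particular
`−√(γ̂/λ)‖B̃‖_∞ ≤ F(t) ≤ 0`, for all `t ∈ [0, T]`. -/
theorem riccati_F_exists_unique_bounds
    (γhat lam T : ℝ) (hγ : 0 < γhat) (hlam : 0 < lam) (hT : 0 < T)
    (Btil : ℝ → ℝ) (hB : ContinuousOn Btil (Icc 0 T)) :
    ∃ F : ℝ → ℝ,
      (ContinuousOn F (Icc 0 T) ∧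
        ∀ t ∈ Icc (0:ℝ) T, F t = -∫ s in t..T, (γhat / lam * Btil s ^ 2 - F s ^ 2)) ∧
      (∀ F' : ℝ → ℝ, ContinuousOn F' (Icc 0 T) →
        (∀ t ∈ Icc (0:ℝ) T, F' t = -∫ s in t..T, (γhat / lam * Btil s ^ 2 - F' s ^ 2)) →
        EqOn F F' (Icc 0 T)) ∧
      (∀ t ∈ Icc (0:ℝ) T,
        -(Real.sqrt (γhat / lam) * supNorm T Btil) *
            Real.tanh (Real.sqrt (γhat / lam) * supNorm T Btil * (T - t)) ≤ F t ∧
        F t ≤ 0 ∧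
        -(Real.sqrt (γhat / lam) * supNorm T Btil) ≤ F t) := by
  have hc : 0 ≤ γhat / lam := div_nonneg hγ.le hlam.le
  have hM : 0 ≤ √(γhat / lam) * supNorm T Btil :=
    mul_nonneg (sqrt_nonneg _) (supNorm_nonneg T Btil)
  have hq : ContinuousOn (fun s ↦ γhat / lam * Btil s ^ 2) (Icc 0 T) :=
    continuousOn_const.mul (hB.pow 2)
  have hqM (s : ℝ) (hs : s ∈ Icc 0 T) :
      γhat / lam * Btil s ^ 2 ≤ (√(γhat / lam) * supNorm T Btil) ^ 2 := by
    rw [mul_pow, sq_sqrt hc, ← sq_abs (Btil s)]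
    exact mul_le_mul_of_nonneg_left (pow_le_pow_left₀ (abs_nonneg _) (abs_le_supNorm hB hs) 2) hc
  obtain ⟨F, hFT, hF, hbounds⟩ :=
    exists_riccati_solution hT.le hM hq (fun s _ ↦ by positivity) hqM
  have hFc : ContinuousOn F (Icc 0 T) := fun t ht ↦ (hF t ht).continuousWithinAt
  refine ⟨F, ⟨hFc, eq_neg_integral_of_hasDerivWithinAt hFT hF (hq.sub (hFc.pow 2))⟩,
    fun F' hF'c hF' ↦ ?_, fun t ht ↦ ?_⟩
  · refine eqOn_of_hasDerivWithinAt_riccati hF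
      (hasDerivWithinAt_of_eq_neg_integral (hq.sub (hF'c.pow 2)) hF') ?_
    rw [hFT, hF' T ⟨hT.le, le_rfl⟩, intervalIntegral.integral_same, neg_zero]
  · obtain ⟨hlow, hup⟩ := hbounds t ht
    exact ⟨hlow, hup, (neg_le_neg_mul_tanh hM _).trans hlow⟩
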